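/- Let p be an odd prime, n ≥ 1, and D = {1 ≤ i ≤ 2p^n − 2 : gcd(i,p) = 1}. The elements of D whose base-p digit sum equals n(p−1) are exactly the integers d_i = 2p^n − p^i − 1 for 0 ≤ i ≤ n. -/

import Mathlib

/-!
Set `c = p^(n+1) - 1 - d`. Subtracting from `p^(n+1) - 1` replaces every base-`p` digit `a` by
`p - 1 - a` without carries, so `s_p(d) + s_p(c) = (n+1)(p-1)`, and the condition becomes
`s_p(c) = p - 1`. The window `1 ≤ d ≤ 2p^n - 2` puts `c = (p-2)p^n + r` with `0 < r < 2p^n`,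
so the leading digit of `c` is `p-2` or `p-1`; the remaining digits then have sum `1` or `0`,
i.e. `r = p^i` with `i < n`, or `r = p^n`.
-/

/-- `sp p n` is the sum of the base-`p` digits of `n`. -/
def sp (p n : ℕ) : ℕ := (Nat.digits p n).sum

lemma sp_zero (p : ℕ) : sp p 0 = 0 := by simp [sp]

lemma sp_of_lt {p a : ℕ} (ha : a < p) : sp p a = a := by
  rcases eq_or_ne a 0 with rfl | ha0
  · exact sp_zero p
  · simp [sp, Nat.digits_of_lt p a ha0 ha]

lemma sp_eq_zero_iff {p r : ℕ} : sp p r = 0 ↔ r = 0 := by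
  refine ⟨fun h => by_contra fun hr => ?_, fun h => h ▸ sp_zero p⟩
  exact Nat.getLast_digit_ne_zero p hr (List.sum_eq_zero_iff.mp h _ (List.getLast_mem _))

lemma sp_add_mul {p a q : ℕ} (hp : 1 < p) (ha : a < p) : sp p (a + p * q) = a + sp p q := by
  by_cases h : a = 0 ∧ q = 0
  · simp [h.1, h.2, sp_zero]
  · simp [sp, Nat.digits_add p hp a q ha (by tauto)]

lemma sp_add_pow_mul {p k r q : ℕ} (hp : 1 < p) (hr : r < p ^ k) :
    sp p (r + p ^ k * q) = sp p r + sp p q := by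
  rcases q.eq_zero_or_pos with rfl | hq
  · simp [sp_zero]
  obtain ⟨j, rfl⟩ := Nat.exists_eq_add_of_le ((Nat.digits_length_le_iff hp r).2 hr)
  simp [sp, ← Nat.digits_append_zeroes_append_digits hp hq]

lemma sp_pow {p : ℕ} (hp : 1 < p) (i : ℕ) : sp p (p ^ i) = 1 := by
  simpa [sp_zero, sp_of_lt hp] using
    sp_add_pow_mul (k := i) (r := 0) (q := 1) hp (Nat.pos_of_ne_zero (by positivity))

lemma sp_eq_one_iff {p r : ℕ} (hp : 1 < p) : sp p r = 1 ↔ ∃ i, r = p ^ i := by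
  refine ⟨fun h => ?_, fun ⟨i, hi⟩ => hi ▸ sp_pow hp i⟩
  induction r using Nat.strong_induction_on with
  | _ r ih =>
    obtain ⟨a, q, ha, rfl⟩ : ∃ a q, a < p ∧ r = a + p * q :=
      ⟨r % p, r / p, Nat.mod_lt r (by omega), (Nat.mod_add_div r p).symm⟩
    rw [sp_add_mul hp ha] at h
    rcases (by omega : a = 0 ∧ sp p q = 1 ∨ a = 1 ∧ sp p q = 0) with ⟨rfl, hq⟩ | ⟨rfl, hq⟩
    · have hq0 : q ≠ 0 := by rintro rfl; simp [sp_zero] at hq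
      obtain ⟨i, rfl⟩ := ih q (by nlinarith [Nat.pos_of_ne_zero hq0]) hq
      exact ⟨i + 1, by ring⟩
    · exact ⟨0, by simp [sp_eq_zero_iff.mp hq]⟩

lemma sp_add_sp_pow_sub_one_sub {p N m : ℕ} (hp : 1 < p) (hm : m < p ^ N) :
    sp p m + sp p (p ^ N - 1 - m) = N * (p - 1) := by
  induction N generalizing m with
  | zero => simp_all [sp_zero]
  | succ N ih =>
    obtain ⟨a, q, ha, rfl⟩ : ∃ a q, a < p ∧ m = a + p * q :=
      ⟨m % p, m / p, Nat.mod_lt m (by omega), (Nat.mod_add_div m p).symm⟩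
    have hq : q < p ^ N := by
      rw [pow_succ'] at hm
      exact Nat.lt_of_mul_lt_mul_left (by omega : p * q < p * p ^ N)
    have hcompl : p ^ (N + 1) - 1 - (a + p * q) = (p - 1 - a) + p * (p ^ N - 1 - q) := by
      have : p * q + p ≤ p * p ^ N := by nlinarith
      rw [pow_succ', Nat.mul_sub, Nat.mul_sub, mul_one]
      omega
    rw [hcompl, sp_add_mul hp ha, sp_add_mul hp (by omega), add_one_mul, ← ih hq]
    omega

lemma sp_sub_two_mul_pow_add_eq_sub_one_iff {p n r : ℕ} (hp : 1 < p) (hr0 : 0 < r)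
    (hr : r < 2 * p ^ n) : sp p ((p - 2) * p ^ n + r) = p - 1 ↔ ∃ i ≤ n, r = p ^ i := by
  rcases lt_or_ge r (p ^ n) with hrn | hrn
  · rw [add_comm, mul_comm, sp_add_pow_mul hp hrn, sp_of_lt (by omega : p - 2 < p),
      show sp p r + (p - 2) = p - 1 ↔ sp p r = 1 by omega, sp_eq_one_iff hp]
    refine ⟨fun ⟨i, hi⟩ => ⟨i, ?_, hi⟩, fun ⟨i, _, hi⟩ => ⟨i, hi⟩⟩
    rw [hi] at hrn
    exact ((Nat.pow_lt_pow_iff_right hp).mp hrn).le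
  · obtain ⟨s, rfl⟩ := Nat.exists_eq_add_of_le hrn
    have hsplit : (p - 2) * p ^ n + (p ^ n + s) = s + p ^ n * (p - 1) := by
      rw [← add_assoc, ← add_one_mul, show p - 2 + 1 = p - 1 by omega]
      ring
    rw [hsplit, sp_add_pow_mul hp (by omega), sp_of_lt (by omega : p - 1 < p),
      show sp p s + (p - 1) = p - 1 ↔ sp p s = 0 by omega, sp_eq_zero_iff]
    refine ⟨fun hs => ⟨n, le_rfl, by rw [hs, add_zero]⟩, fun ⟨i, hi, hs⟩ => ?_⟩
    have := Nat.pow_le_pow_right (by omega : 0 < p) hi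
    omega

theorem stmt_9_general (p : ℕ) (n : ℕ)
    (D : Finset ℕ) (hD : D = (Finset.Icc 1 (2 * p ^ n - 2)).filter fun i => Nat.gcd i p = 1)
    (d : ℕ) (hd : d ∈ D) :
    sp p d = n * (p - 1) ↔ ∃ i ≤ n, d = 2 * p ^ n - p ^ i - 1 := by
  subst hD
  obtain ⟨hd1, hd2⟩ := Finset.mem_Icc.mp (Finset.mem_filter.mp hd).1
  have hp : 1 < p := lt_of_pow_lt_pow_left₀ n (Nat.zero_le p) (by rw [one_pow]; omega)
  have hpow : (p - 2) * p ^ n + 2 * p ^ n = p ^ (n + 1) := by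
    rw [← add_mul, Nat.sub_add_cancel hp, pow_succ']
  have hsum := sp_add_sp_pow_sub_one_sub hp (by omega : d < p ^ (n + 1))
  rw [show p ^ (n + 1) - 1 - d = (p - 2) * p ^ n + (2 * p ^ n - 1 - d) by omega,
    add_one_mul] at hsum
  calc sp p d = n * (p - 1) ↔ sp p ((p - 2) * p ^ n + (2 * p ^ n - 1 - d)) = p - 1 := by omega
    _ ↔ ∃ i ≤ n, 2 * p ^ n - 1 - d = p ^ i :=
      sp_sub_two_mul_pow_add_eq_sub_one_iff hp (by omega) (by omega)
    _ ↔ ∃ i ≤ n, d = 2 * p ^ n - p ^ i - 1 := by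
      refine exists_congr fun i => and_congr_right fun _ => ?_
      omega

/-- For `p` an odd prime and `D = {1 ≤ i ≤ 2p^n − 2 : gcd(i,p) = 1}`, the elements of `D`
with base-`p` digit sum `n(p−1)` are exactly the `d_i = 2p^n − p^i − 1`, `0 ≤ i ≤ n`. -/
theorem stmt_9 (p : ℕ) (hp : p.Prime) (hodd : Odd p) (n : ℕ) (hn : 0 < n)
    (D : Finset ℕ) (hD : D = (Finset.Icc 1 (2 * p ^ n - 2)).filter fun i => Nat.gcd i p = 1)
    (d : ℕ) (hd : d ∈ D) :
    sp p d = n * (p - 1) ↔ ∃ i ≤ n, d = 2 * p ^ n - p ^ i - 1 :=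
  stmt_9_general p n D hD d hd
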